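/- Suppose η = Σ_{r∈Σ_R} p_r K_r^{−α_min} < 1, let β ∈ (α_min,γ) ∩ (0,1], t₁ = α_min+1−β, and let a₁ > 0. If f ∈ C₁ satisfies f(u) ≤ a₁ u^{−t₁} on (0,1/2], then for all x, y ∈ (0,1/2] with x ≥ y one has 0 ≤ x^d f(x) − y^d f(y) ≤ a₁ · 2^{−d+1+t₁} · d · (x − y); in particular the map u ↦ u^d f(u) is Lipschitz on (0,1/2] with Lipschitz constant a₁ · 2^{−d+1+t₁} · d. -/
import Mathlib


open MeasureTheory Set

/-- Left branch of the LSV-type maps: `x ↦ x(1 + 2^α x^α)`. -/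
noncomputable def lsvLeft (α x : ℝ) : ℝ := x * (1 + 2 ^ α * x ^ α)

/-- The LSV map `S_α`. -/
noncomputable def lsvMap (α : ℝ) (x : ℝ) : ℝ :=
  if x ≤ 1 / 2 then lsvLeft α x else 2 * x - 1

/-- The map `R_{α,K}`. -/
noncomputable def rMap (α K : ℝ) (x : ℝ) : ℝ :=
  if x ≤ 1 / 2 then lsvLeft α x
  else 1 / 2 + K * (x - 1 / 2) + 2 * (1 - K) * (x - 1 / 2) ^ 2

/-- The Perron–Frobenius operator `P` of the random system, written in terms of
the inverse `y j` of the left branch of `T j`, the inverse `zr r` of the right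
branch of `T r` (for `r ∈ SR`), and `z(x) = (x+1)/2`.  Here
`ξ_j(x) = (2 y_j(x))^{α_j}` and `DR_r(u) = K_r + 4(1-K_r)(u - 1/2)`. -/
noncomputable def PFop {N : ℕ} (SR : Finset (Fin N)) (p α K : Fin N → ℝ)
    (y zr : Fin N → ℝ → ℝ) (f : ℝ → ℝ) (x : ℝ) : ℝ :=
  (∑ j, p j * (f (y j x) / (1 + (α j + 1) * (2 * y j x) ^ (α j))))
    + (∑ j ∈ SRᶜ, p j) * (f ((x + 1) / 2) / 2)
    + if 1 / 2 < x then
        ∑ r ∈ SR, p r * (f (zr r x) / (K r + 4 * (1 - K r) * (zr r x - 1 / 2)))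
      else 0

/-- Membership of the set `C₀`: nonnegative, decreasing and continuous on
`(0,1/2]` and on `(1/2,1]`, and Lebesgue integrable. -/
def memC0 (f : ℝ → ℝ) : Prop :=
  (∀ x ∈ Set.Ioc (0 : ℝ) 1, 0 ≤ f x) ∧
  AntitoneOn f (Set.Ioc (0 : ℝ) (1 / 2)) ∧
  ContinuousOn f (Set.Ioc (0 : ℝ) (1 / 2)) ∧
  AntitoneOn f (Set.Ioc (1 / 2 : ℝ) 1) ∧
  ContinuousOn f (Set.Ioc (1 / 2 : ℝ) 1) ∧
  MeasureTheory.IntegrableOn f (Set.Ioc (0 : ℝ) 1)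


/-- Membership of the set `C₁`: member of `C₀` such that `x ↦ x^d f(x)` is
increasing on `(0,1/2]` and `x ↦ (x-1/2)^d f(x)` is increasing on `(1/2,1]`. -/
def memC1 (d : ℝ) (f : ℝ → ℝ) : Prop :=
  memC0 f ∧
  MonotoneOn (fun x => x ^ d * f x) (Set.Ioc (0 : ℝ) (1 / 2)) ∧
  MonotoneOn (fun x => (x - 1 / 2) ^ d * f x) (Set.Ioc (1 / 2 : ℝ) 1)

/-- Membership of the set `C₂(a₁,a₂,β)` (with `t₁ = α_min + 1 - β`,
`t₂ = 1 - β`): member of `C₁` with `f(x) ≤ a₁ x^{-t₁}` on `(0,1/2]`,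
`f(x) ≤ a₂ (x-1/2)^{-t₂}` on `(1/2,1]` and `∫₀¹ f dλ = 1`. -/
def memC2 (d t₁ t₂ a₁ a₂ : ℝ) (f : ℝ → ℝ) : Prop :=
  memC1 d f ∧
  (∀ x ∈ Set.Ioc (0 : ℝ) (1 / 2), f x ≤ a₁ * x ^ (-t₁)) ∧
  (∀ x ∈ Set.Ioc (1 / 2 : ℝ) 1, f x ≤ a₂ * (x - 1 / 2) ^ (-t₂)) ∧
  ∫ x in Set.Ioc (0 : ℝ) 1, f x = 1

lemma rpow_sub_rpow_le_mvt {y x d : ℝ} (hy : 0 < y) (hyx : y ≤ x) (hd : 1 ≤ d) :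
    x ^ d - y ^ d ≤ d * x ^ (d - 1) * (x - y) := by
  rcases eq_or_lt_of_le hyx with rfl | hlt
  · simp
  have hx : 0 < x := lt_trans hy hlt
  have hfc : ContinuousOn (fun u : ℝ => u ^ d) (Icc y x) :=
    fun u hu => (Real.continuousAt_rpow_const u d (Or.inl (hy.trans_le hu.1).ne')).continuousWithinAt
  have hff' : ∀ u ∈ Ioo y x, HasDerivAt (fun u : ℝ => u ^ d) (d * u ^ (d - 1)) u := by
    intro u hu
    exact Real.hasDerivAt_rpow_const (Or.inl (hy.trans hu.1).ne')
  obtain ⟨c, hc, hceq⟩ := exists_hasDerivAt_eq_slope (fun u : ℝ => u ^ d)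
    (fun u => d * u ^ (d - 1)) hlt hfc hff'
  have hcx : c ^ (d - 1) ≤ x ^ (d - 1) :=
    Real.rpow_le_rpow (le_of_lt (hy.trans hc.1)) hc.2.le (by linarith)
  have h1 : x ^ d - y ^ d = d * c ^ (d - 1) * (x - y) := by
    have hxy : x - y ≠ 0 := sub_ne_zero.2 (ne_of_gt hlt)
    field_simp at hceq
    linarith [hceq]
  rw [h1]
  have hd0 : (0:ℝ) ≤ d := by linarith
  nlinarith [sub_nonneg.2 hyx, mul_le_mul_of_nonneg_left hcx hd0]

/-- Inequality (3.25): Lipschitz estimate for `u ↦ u^d f(u)` on `(0,1/2]` for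
`f ∈ C₁` with `f(u) ≤ a₁ u^{-t₁}` on `(0,1/2]`, where `t₁ = α_min + 1 - β`. -/
theorem lipschitz_left_of_memC1
    (N : ℕ) (hN : 0 < N)
    (α K : Fin N → ℝ) (SR : Finset (Fin N))
    (hSR : SR.Nonempty) (hSS : SRᶜ.Nonempty)
    (hα : ∀ j, 0 < α j)
    (hK : ∀ r ∈ SR, K r ∈ Set.Ioo (0 : ℝ) 1)
    (p : Fin N → ℝ) (hp : ∀ j, 0 < p j) (hp1 : ∑ j, p j = 1)
    (αmin : ℝ) (hαmin : IsLeast (Set.range α) αmin) (hαmin1 : αmin < 1)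
    (αmax : ℝ) (hαmax : IsGreatest (Set.range α) αmax)
    (d : ℝ) (hd : d = αmax + 2)
    (hη : ∑ r ∈ SR, p r * K r ^ (-αmin) < 1)
    (γ : ℝ) (hγ : γ = sSup {δ : ℝ | 0 ≤ δ ∧ ∑ r ∈ SR, p r * K r ^ (-δ) < 1})
    (β : ℝ) (hβ1 : αmin < β) (hβ2 : β < γ) (hβ3 : 0 < β) (hβ4 : β ≤ 1)
    (t₁ : ℝ) (ht₁ : t₁ = αmin + 1 - β)
    (a₁ : ℝ) (ha₁ : 0 < a₁)
    (f : ℝ → ℝ) (hf : memC1 d f)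
    (hfbd : ∀ u ∈ Set.Ioc (0 : ℝ) (1 / 2), f u ≤ a₁ * u ^ (-t₁)) :
    (∀ x ∈ Set.Ioc (0 : ℝ) (1 / 2), ∀ y ∈ Set.Ioc (0 : ℝ) (1 / 2), y ≤ x →
      0 ≤ x ^ d * f x - y ^ d * f y ∧
      x ^ d * f x - y ^ d * f y ≤ a₁ * 2 ^ (-d + 1 + t₁) * d * (x - y)) ∧
    LipschitzOnWith (Real.toNNReal (a₁ * 2 ^ (-d + 1 + t₁) * d))
      (fun u => u ^ d * f u) (Set.Ioc (0 : ℝ) (1 / 2)) := by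
  -- basic facts
  obtain ⟨j0, hj0⟩ := hαmax.1
  have hαmax_pos : 0 < αmax := hj0 ▸ hα j0
  have hαminmax : αmin ≤ αmax := hαmax.2 (hαmin.1)
  have hαmin_pos : 0 < αmin := by
    obtain ⟨j1, hj1⟩ := hαmin.1
    exact hj1 ▸ hα j1
  have hd1 : 1 ≤ d := by rw [hd]; linarith
  have he : 0 ≤ d - 1 - t₁ := by rw [hd, ht₁]; linarith
  set C : ℝ := a₁ * 2 ^ (-d + 1 + t₁) * d with hC
  have hCpos : 0 < C := by
    apply mul_pos (mul_pos ha₁ (Real.rpow_pos_of_pos two_pos _)); linarith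
  have key : ∀ x ∈ Set.Ioc (0 : ℝ) (1 / 2), ∀ y ∈ Set.Ioc (0 : ℝ) (1 / 2), y ≤ x →
      0 ≤ x ^ d * f x - y ^ d * f y ∧
      x ^ d * f x - y ^ d * f y ≤ C * (x - y) := by
    intro x hx y hy hyx
    constructor
    · exact sub_nonneg.2 (hf.2.1 hy hx hyx)
    · have hfx0 : 0 ≤ f x := hf.1.1 x ⟨hx.1, hx.2.trans (by norm_num)⟩
      have hfdec : f x ≤ f y := hf.1.2.1 hy hx hyx
      have hyd : (0:ℝ) ≤ y ^ d := Real.rpow_nonneg hy.1.le d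
      have step1 : x ^ d * f x - y ^ d * f y ≤ (x ^ d - y ^ d) * f x := by
        have : y ^ d * f x ≤ y ^ d * f y := mul_le_mul_of_nonneg_left hfdec hyd
        ring_nf
        nlinarith
      have hxd : x ^ d - y ^ d ≤ d * x ^ (d - 1) * (x - y) :=
        rpow_sub_rpow_le_mvt hy.1 hyx hd1
      have hxd0 : 0 ≤ x ^ d - y ^ d :=
        sub_nonneg.2 (Real.rpow_le_rpow hy.1.le hyx (by linarith))
      have hfb : f x ≤ a₁ * x ^ (-t₁) := hfbd x hx
      have step2 : (x ^ d - y ^ d) * f x ≤ (d * x ^ (d - 1) * (x - y)) * (a₁ * x ^ (-t₁)) := by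
        apply mul_le_mul hxd hfb hfx0
        have hxy0 : 0 ≤ x - y := sub_nonneg.2 hyx
        have hxp : 0 ≤ x ^ (d - 1) := Real.rpow_nonneg hx.1.le _
        have hd0 : (0:ℝ) ≤ d := by linarith
        positivity
      have hxpow : x ^ (d - 1) * x ^ (-t₁) = x ^ (d - 1 - t₁) := by
        rw [← Real.rpow_add hx.1]; ring_nf
      have hxle : x ^ (d - 1 - t₁) ≤ 2 ^ (-d + 1 + t₁) := by
        have h1 : x ^ (d - 1 - t₁) ≤ (1 / 2 : ℝ) ^ (d - 1 - t₁) :=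
          Real.rpow_le_rpow hx.1.le hx.2 he
        have h2 : ((1:ℝ) / 2) ^ (d - 1 - t₁) = (2:ℝ) ^ (-(d - 1 - t₁)) := by
          rw [Real.rpow_neg (by norm_num), ← Real.inv_rpow (by norm_num)]
          norm_num
        rw [h2] at h1
        have : -(d - 1 - t₁) = -d + 1 + t₁ := by ring
        rwa [this] at h1
      have hxy0 : 0 ≤ x - y := sub_nonneg.2 hyx
      calc x ^ d * f x - y ^ d * f y ≤ (x ^ d - y ^ d) * f x := step1
        _ ≤ (d * x ^ (d - 1) * (x - y)) * (a₁ * x ^ (-t₁)) := step2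
        _ = (a₁ * d * (x - y)) * (x ^ (d - 1) * x ^ (-t₁)) := by ring
        _ = (a₁ * d * (x - y)) * x ^ (d - 1 - t₁) := by rw [hxpow]
        _ ≤ (a₁ * d * (x - y)) * 2 ^ (-d + 1 + t₁) := by
            apply mul_le_mul_of_nonneg_left hxle
            have : 0 < a₁ * d := mul_pos ha₁ (by linarith)
            positivity
        _ = C * (x - y) := by rw [hC]; ring
  refine ⟨key, ?_⟩
  rw [lipschitzOnWith_iff_dist_le_mul]
  intro x hx y hy
  have hCco : (Real.toNNReal C : ℝ) = C := Real.coe_toNNReal _ hCpos.le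
  rw [Real.dist_eq, Real.dist_eq, hCco]
  rcases le_total y x with h | h
  · obtain ⟨h0, h1⟩ := key x hx y hy h
    rw [abs_of_nonneg h0, abs_of_nonneg (sub_nonneg.2 h)]
    exact h1
  · obtain ⟨h0, h1⟩ := key y hy x hx h
    rw [abs_sub_comm, abs_of_nonneg h0, abs_sub_comm, abs_of_nonneg (sub_nonneg.2 h)]
    exact h1
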